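/- (Sufficiency direction of Theorem 1.) Let the target path p : ℝ → ℝ² have unit tangent e'_1(s) = (cos θ_r(s), sin θ_r(s)) with θ_r continuously differentiable and κ_r = θ_r' locally Lipschitz, and unit normal e'_2(s) = (−sin θ_r(s), cos θ_r(s)). Let q : [t₀,t₁] → ℝ² satisfy q̇ = v(cos θ_o, sin θ_o) with θ̇_o = κ v for continuous v, κ and differentiable θ_o. Suppose (θ, s_r, z) : [t₀,t₁] → ℝ³ is a differentiable solution of ṡ_r = v cos θ / (1 − κ_r(s_r) z), ż = v sin θ, θ̇ = κ v − κ_r(s_r)·v cos θ / (1 − κ_r(s_r) z), with 1 − κ_r(s_r(t)) z(t) > 0 for all t, and the initial conditions θ(t₀) = θ_o(t₀) − θ_r(s_r(t₀)), (q(t₀) − p(s_r(t₀))) · e'_1(s_r(t₀)) = 0, and (q(t₀) − p(s_r(t₀))) · e'_2(s_r(t₀)) = z(t₀). Then for all t ∈ [t₀,t₁]: (q(t) − p(s_r(t))) · e'_1(s_r(t)) = 0, (q(t) − p(s_r(t))) · e'_2(s_r(t)) = z(t), and θ(t) = θ_o(t) − θ_r(s_r(t)). -/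

import Mathlib

/-!
Differentiating `θ - θ_o + θ_r ∘ s_r` gives zero, so the heading identity holds throughout.
Using it, the coordinates `a = (q - p(s_r)) ⬝ e'_1(s_r)` and `b = (q - p(s_r)) ⬝ e'_2(s_r) - z` of the
error in the moving frame satisfy the rotation equation `a' = ω b`, `b' = -ω a` with
`ω = κ_r(s_r) ṡ_r`; hence `a² + b²` is constant, and it vanishes at `t₀`.
-/

/-- Euclidean dot product on `ℝ × ℝ`. -/
def dot (a b : ℝ × ℝ) : ℝ := a.1 * b.1 + a.2 * b.2

open Real Set

noncomputable def unitVec (φ : ℝ) : ℝ × ℝ := (cos φ, sin φ)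

noncomputable def unitNormal (φ : ℝ) : ℝ × ℝ := (-sin φ, cos φ)

section DotAlgebra

variable (x y w : ℝ × ℝ) (c : ℝ)

theorem dot_sub_left : dot (x - y) w = dot x w - dot y w := by
  simp only [dot, Prod.fst_sub, Prod.snd_sub]; ring

theorem dot_smul_left : dot (c • x) w = c * dot x w := by
  simp only [dot, Prod.smul_fst, Prod.smul_snd, smul_eq_mul]; ring

theorem dot_smul_right : dot x (c • w) = c * dot x w := by
  simp only [dot, Prod.smul_fst, Prod.smul_snd, smul_eq_mul]; ring

theorem dot_neg_right : dot x (-w) = -dot x w := by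
  simp only [dot, Prod.fst_neg, Prod.snd_neg]; ring

end DotAlgebra

theorem dot_unitVec_unitVec (a b : ℝ) : dot (unitVec a) (unitVec b) = cos (a - b) := by
  simp only [dot, unitVec, cos_sub]

theorem dot_unitVec_unitNormal (a b : ℝ) : dot (unitVec a) (unitNormal b) = sin (a - b) := by
  simp only [dot, unitVec, unitNormal, sin_sub]; ring

section Derivatives

variable {f g : ℝ → ℝ × ℝ} {f' g' : ℝ × ℝ} {φ : ℝ → ℝ} {φ' : ℝ} {s : Set ℝ} {t : ℝ}

theorem HasDerivWithinAt.fst (hf : HasDerivWithinAt f f' s t) :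
    HasDerivWithinAt (fun t => (f t).1) f'.1 s t := by
  simpa using hf.hasFDerivWithinAt.fst.hasDerivWithinAt

theorem HasDerivWithinAt.snd (hf : HasDerivWithinAt f f' s t) :
    HasDerivWithinAt (fun t => (f t).2) f'.2 s t := by
  simpa using hf.hasFDerivWithinAt.snd.hasDerivWithinAt

theorem HasDerivWithinAt.dot (hf : HasDerivWithinAt f f' s t) (hg : HasDerivWithinAt g g' s t) :
    HasDerivWithinAt (fun t => dot (f t) (g t)) (dot f' (g t) + dot (f t) g') s t := by
  refine ((hf.fst.mul hg.fst).add (hf.snd.mul hg.snd)).congr_deriv ?_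
  simp only [_root_.dot]; ring

theorem HasDerivWithinAt.unitVec (hφ : HasDerivWithinAt φ φ' s t) :
    HasDerivWithinAt (fun t => unitVec (φ t)) (φ' • unitNormal (φ t)) s t := by
  refine (hφ.cos.prodMk hφ.sin).congr_deriv ?_
  simp only [_root_.unitNormal, Prod.smul_mk, smul_eq_mul]; ring_nf

theorem HasDerivWithinAt.unitNormal (hφ : HasDerivWithinAt φ φ' s t) :
    HasDerivWithinAt (fun t => unitNormal (φ t)) (-(φ' • _root_.unitVec (φ t))) s t := by
  refine (hφ.sin.neg.prodMk hφ.cos).congr_deriv ?_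
  simp only [_root_.unitVec, Prod.smul_mk, smul_eq_mul, Prod.neg_mk]; ring_nf

end Derivatives

section FrameCoordinates

variable {w : ℝ → ℝ × ℝ} {φ : ℝ → ℝ} {v ψ σ φ' : ℝ} {s : Set ℝ} {t : ℝ}

theorem hasDerivWithinAt_dot_unitVec
    (hw : HasDerivWithinAt w (v • unitVec ψ - σ • unitVec (φ t)) s t)
    (hφ : HasDerivWithinAt φ φ' s t) :
    HasDerivWithinAt (fun t => dot (w t) (unitVec (φ t)))
      (v * cos (ψ - φ t) - σ + φ' * dot (w t) (unitNormal (φ t))) s t := by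
  refine (hw.dot hφ.unitVec).congr_deriv ?_
  rw [dot_sub_left, dot_smul_left, dot_smul_left, dot_smul_right, dot_unitVec_unitVec,
    dot_unitVec_unitVec, sub_self, cos_zero, mul_one]

theorem hasDerivWithinAt_dot_unitNormal
    (hw : HasDerivWithinAt w (v • unitVec ψ - σ • unitVec (φ t)) s t)
    (hφ : HasDerivWithinAt φ φ' s t) :
    HasDerivWithinAt (fun t => dot (w t) (unitNormal (φ t)))
      (v * sin (ψ - φ t) - φ' * dot (w t) (unitVec (φ t))) s t := by
  refine (hw.dot hφ.unitNormal).congr_deriv ?_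
  rw [dot_sub_left, dot_smul_left, dot_smul_left, dot_neg_right, dot_smul_right,
    dot_unitVec_unitNormal, dot_unitVec_unitNormal, sub_self, sin_zero]
  ring

end FrameCoordinates

theorem eq_of_hasDerivWithinAt_eq_Icc {f g f' : ℝ → ℝ} {a b : ℝ}
    (hf : ∀ t ∈ Icc a b, HasDerivWithinAt f (f' t) (Icc a b) t)
    (hg : ∀ t ∈ Icc a b, HasDerivWithinAt g (f' t) (Icc a b) t) (hfg : f a = g a) :
    ∀ t ∈ Icc a b, f t = g t :=
  have hIci {h : ℝ → ℝ} (hh : ∀ t ∈ Icc a b, HasDerivWithinAt h (f' t) (Icc a b) t) (t)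
      (ht : t ∈ Ico a b) : HasDerivWithinAt h (f' t) (Ici t) t :=
    (hh t (Ico_subset_Icc_self ht)).mono_of_mem_nhdsWithin (Icc_mem_nhdsGE_of_mem ht)
  eq_of_has_deriv_right_eq (hIci hf) (hIci hg) (fun t ht => (hf t ht).continuousWithinAt)
    (fun t ht => (hg t ht).continuousWithinAt) hfg

theorem eq_zero_of_hasDerivWithinAt_rotation {a b ω : ℝ → ℝ} {t0 t1 : ℝ}
    (ha : ∀ t ∈ Icc t0 t1, HasDerivWithinAt a (ω t * b t) (Icc t0 t1) t)
    (hb : ∀ t ∈ Icc t0 t1, HasDerivWithinAt b (-(ω t * a t)) (Icc t0 t1) t)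
    (ha0 : a t0 = 0) (hb0 : b t0 = 0) : ∀ t ∈ Icc t0 t1, a t = 0 ∧ b t = 0 := by
  have hsq := eq_of_hasDerivWithinAt_eq_Icc (f := fun t => a t ^ 2 + b t ^ 2) (g := fun _ => 0)
    (fun t ht => (((ha t ht).pow 2).add ((hb t ht).pow 2)).congr_deriv (by ring))
    (fun t _ => hasDerivWithinAt_const t _ 0) (by simp [ha0, hb0])
  intro t ht
  obtain ⟨ha, hb⟩ := (add_eq_zero_iff_of_nonneg (sq_nonneg _) (sq_nonneg _)).1 (hsq t ht)
  exact ⟨pow_eq_zero_iff two_ne_zero |>.1 ha, pow_eq_zero_iff two_ne_zero |>.1 hb⟩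

theorem error_dynamics_sufficiency_general
    (θr : ℝ → ℝ) (hθr : ContDiff ℝ 1 θr)
    (κr : ℝ → ℝ) (hκr : ∀ s, κr s = deriv θr s)
    (e1 e2 : ℝ → ℝ × ℝ)
    (he1 : ∀ s, e1 s = (Real.cos (θr s), Real.sin (θr s)))
    (he2 : ∀ s, e2 s = (-Real.sin (θr s), Real.cos (θr s)))
    (p : ℝ → ℝ × ℝ) (hp : ∀ s, HasDerivAt p (e1 s) s)
    (t0 t1 : ℝ)
    (q : ℝ → ℝ × ℝ) (v κ θo : ℝ → ℝ)
    (hθo : ∀ t ∈ Set.Icc t0 t1, HasDerivWithinAt θo (κ t * v t) (Set.Icc t0 t1) t)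
    (hq : ∀ t ∈ Set.Icc t0 t1,
      HasDerivWithinAt q (v t • (Real.cos (θo t), Real.sin (θo t))) (Set.Icc t0 t1) t)
    (θ sr z : ℝ → ℝ)
    (hsr : ∀ t ∈ Set.Icc t0 t1,
      HasDerivWithinAt sr (v t * Real.cos (θ t) / (1 - κr (sr t) * z t))
        (Set.Icc t0 t1) t)
    (hzder : ∀ t ∈ Set.Icc t0 t1,
      HasDerivWithinAt z (v t * Real.sin (θ t)) (Set.Icc t0 t1) t)
    (hθder : ∀ t ∈ Set.Icc t0 t1,
      HasDerivWithinAt θ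
        (κ t * v t - κr (sr t) * v t * Real.cos (θ t) / (1 - κr (sr t) * z t))
        (Set.Icc t0 t1) t)
    (hD : ∀ t ∈ Set.Icc t0 t1, 1 - κr (sr t) * z t > 0)
    (hθ0 : θ t0 = θo t0 - θr (sr t0))
    (horth0 : dot (q t0 - p (sr t0)) (e1 (sr t0)) = 0)
    (hz0 : dot (q t0 - p (sr t0)) (e2 (sr t0)) = z t0) :
    ∀ t ∈ Set.Icc t0 t1,
      dot (q t - p (sr t)) (e1 (sr t)) = 0 ∧
      dot (q t - p (sr t)) (e2 (sr t)) = z t ∧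
      θ t = θo t - θr (sr t) := by
  obtain rfl : e1 = fun s => unitVec (θr s) := funext he1
  obtain rfl : e2 = fun s => unitNormal (θr s) := funext he2
  have hθr' (s : ℝ) : HasDerivAt θr (κr s) s :=
    hκr s ▸ (hθr.differentiable one_ne_zero s).hasDerivAt
  have hθ : ∀ t ∈ Icc t0 t1, θ t = θo t - θr (sr t) :=
    eq_of_hasDerivWithinAt_eq_Icc hθder (fun t ht => ((hθo t ht).sub
      ((hθr' (sr t)).comp_hasDerivWithinAt t (hsr t ht))).congr_deriv (by ring)) hθ0
  set σ : ℝ → ℝ := fun t => v t * cos (θ t) / (1 - κr (sr t) * z t)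
  have hσD (t) (ht : t ∈ Icc t0 t1) : σ t * (1 - κr (sr t) * z t) = v t * cos (θ t) :=
    div_mul_cancel₀ _ (hD t ht).ne'
  have hframe (t) (ht : t ∈ Icc t0 t1) :
      HasDerivWithinAt (fun t => θr (sr t)) (κr (sr t) * σ t) (Icc t0 t1) t :=
    (hθr' (sr t)).comp_hasDerivWithinAt t (hsr t ht)
  have hw (t) (ht : t ∈ Icc t0 t1) : HasDerivWithinAt (fun t => q t - p (sr t))
      (v t • unitVec (θo t) - σ t • unitVec (θr (sr t))) (Icc t0 t1) t :=
    (hq t ht).sub ((hp (sr t)).scomp_hasDerivWithinAt t (hsr t ht))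
  have hcoords := eq_zero_of_hasDerivWithinAt_rotation (t1 := t1) (ω := fun t => κr (sr t) * σ t)
    (a := fun t => dot (q t - p (sr t)) (unitVec (θr (sr t))))
    (b := fun t => dot (q t - p (sr t)) (unitNormal (θr (sr t))) - z t) ?_ ?_ horth0
    (sub_eq_zero.2 hz0)
  · intro t ht
    exact ⟨(hcoords t ht).1, sub_eq_zero.1 (hcoords t ht).2, hθ t ht⟩
  · intro t ht
    refine (hasDerivWithinAt_dot_unitVec (hw t ht) (hframe t ht)).congr_deriv ?_
    rw [← hθ t ht]
    linear_combination -hσD t ht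
  · intro t ht
    refine ((hasDerivWithinAt_dot_unitNormal (hw t ht) (hframe t ht)).sub
      (hzder t ht)).congr_deriv ?_
    rw [← hθ t ht]
    ring

/-- Sufficiency direction of Theorem 1: if `(θ, s_r, z)` is a
differentiable solution of the error state equations on `[t₀,t₁]` with
`1 − κ_r(s_r) z > 0`, whose initial data agree with the geometric
quantities at `t₀`, then for all `t ∈ [t₀,t₁]`:
`(q − p(s_r)) ⬝ e'_1(s_r) = 0`, `(q − p(s_r)) ⬝ e'_2(s_r) = z`, and
`θ = θ_o − θ_r(s_r)`. -/
theorem error_dynamics_sufficiency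
    (θr : ℝ → ℝ) (hθr : ContDiff ℝ 1 θr)
    (κr : ℝ → ℝ) (hκr : ∀ s, κr s = deriv θr s) (hκrLip : LocallyLipschitz κr)
    (e1 e2 : ℝ → ℝ × ℝ)
    (he1 : ∀ s, e1 s = (Real.cos (θr s), Real.sin (θr s)))
    (he2 : ∀ s, e2 s = (-Real.sin (θr s), Real.cos (θr s)))
    (p : ℝ → ℝ × ℝ) (hp : ∀ s, HasDerivAt p (e1 s) s)
    (t0 t1 : ℝ) (ht01 : t0 ≤ t1)
    (q : ℝ → ℝ × ℝ) (v κ θo : ℝ → ℝ)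
    (hv : ContinuousOn v (Set.Icc t0 t1)) (hκcont : ContinuousOn κ (Set.Icc t0 t1))
    (hθo : ∀ t ∈ Set.Icc t0 t1, HasDerivWithinAt θo (κ t * v t) (Set.Icc t0 t1) t)
    (hq : ∀ t ∈ Set.Icc t0 t1,
      HasDerivWithinAt q (v t • (Real.cos (θo t), Real.sin (θo t))) (Set.Icc t0 t1) t)
    (θ sr z : ℝ → ℝ)
    (hsr : ∀ t ∈ Set.Icc t0 t1,
      HasDerivWithinAt sr (v t * Real.cos (θ t) / (1 - κr (sr t) * z t))
        (Set.Icc t0 t1) t)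
    (hzder : ∀ t ∈ Set.Icc t0 t1,
      HasDerivWithinAt z (v t * Real.sin (θ t)) (Set.Icc t0 t1) t)
    (hθder : ∀ t ∈ Set.Icc t0 t1,
      HasDerivWithinAt θ
        (κ t * v t - κr (sr t) * v t * Real.cos (θ t) / (1 - κr (sr t) * z t))
        (Set.Icc t0 t1) t)
    (hD : ∀ t ∈ Set.Icc t0 t1, 1 - κr (sr t) * z t > 0)
    (hθ0 : θ t0 = θo t0 - θr (sr t0))
    (horth0 : dot (q t0 - p (sr t0)) (e1 (sr t0)) = 0)
    (hz0 : dot (q t0 - p (sr t0)) (e2 (sr t0)) = z t0) :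
    ∀ t ∈ Set.Icc t0 t1,
      dot (q t - p (sr t)) (e1 (sr t)) = 0 ∧
      dot (q t - p (sr t)) (e2 (sr t)) = z t ∧
      θ t = θo t - θr (sr t) :=
  error_dynamics_sufficiency_general θr hθr κr hκr e1 e2 he1 he2 p hp t0 t1 q v κ θo hθo hq θ sr z
    hsr hzder hθder hD hθ0 horth0 hz0
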